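/- arXiv:2503.23936 — 2 statements merged into one kernel-verified Lean document; each statement's English description precedes it below -/
import Mathlib

section
/- Let (a_i, b_i)_{i<ω} be a sequence of pairs from sets A and B, and let φ ⊆ A × B be a binary relation. If φ is an 'equation' in the sense that for every subsequence indexed by an infinite subset S ⊆ ω which is 'indiscernible' for φ (i.e., whether φ(a_i, b_j) holds depends only on the order relation between i and j), φ(a_i, b_j) for all i<j in S implies φ(a_i, b_i) for all i in S, then φ does not have the order property: there are no sequences (a_i) and (b_j) with φ(a_i, b_j) holding iff i < j. (Abstract combinatorial version of: every equation is a stable formula.) -/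
/-- A subsequence indexed by `S` is indiscernible for `φ`: the truth value of
`φ (a i) (b j)` for `i, j ∈ S` depends only on the order comparison of `i` and `j`. -/
def IndiscFor {A B : Type*} (φ : A → B → Prop) (a : ℕ → A) (b : ℕ → B) (S : Set ℕ) : Prop :=
  ∀ i ∈ S, ∀ j ∈ S, ∀ i' ∈ S, ∀ j' ∈ S,
    compare i j = compare i' j' → (φ (a i) (b j) ↔ φ (a i') (b j'))

/-- Abstract combinatorial version of: every equation is a stable formula. -/
theorem stmt_0 {A B : Type*} (φ : A → B → Prop)
    (heq : ∀ (a : ℕ → A) (b : ℕ → B) (S : Set ℕ), S.Infinite → IndiscFor φ a b S →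
      (∀ i ∈ S, ∀ j ∈ S, i < j → φ (a i) (b j)) → ∀ i ∈ S, φ (a i) (b i)) :
    ¬ ∃ (a : ℕ → A) (b : ℕ → B), ∀ i j : ℕ, φ (a i) (b j) ↔ i < j := by
  rintro ⟨a, b, hab⟩
  have hind : IndiscFor φ a b Set.univ := by
    intro i _ j _ i' _ j' _ h
    rw [hab, hab]
    constructor
    · intro hij
      have := (compare_lt_iff_lt (a := i) (b := j)).2 hij
      rw [h] at this
      exact compare_lt_iff_lt.1 this
    · intro hij
      have := (compare_lt_iff_lt (a := i') (b := j')).2 hij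
      rw [← h] at this
      exact compare_lt_iff_lt.1 this
  have := heq a b Set.univ Set.infinite_univ hind
    (fun i _ j _ hij => (hab i j).2 hij) 0 (Set.mem_univ 0)
  exact lt_irrefl 0 ((hab 0 0).1 this)
end

section
/- Let ⫝ be a ternary relation on subsets of a fixed set M (an abstract independence relation) satisfying invariance-free versions of: symmetry, monotonicity, right base monotonicity, left transitivity, right extension, and local character with bound κ(A) for finite A being at most |T|⁺ for a fixed infinite cardinal |T|. Let κ > |T|⁺ be a regular cardinal, let (M_i)_{i<κ} be a continuous increasing chain of subsets each of cardinality < κ, with union M of cardinality κ. Then for every finite tuple a there exists i < κ such that a ⫝_{M_i} M. -/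
/-!
Local character gives a base `C ⊆ ⋃ M_i` of size `< |T|⁺ < κ`. Since `κ` is regular, such a small
set already lies in a single `M_i`, and right base monotonicity moves the base from `C` up to `M_i`.
-/

open Cardinal

universe u

theorem exists_lt_subset_of_subset_biUnion_of_mk_lt_cof {Ω : Type u} {o : Ordinal.{u}}
    {M : Ordinal.{u} → Set Ω} (hM : ∀ i j, i ≤ j → j < o → M i ⊆ M j) {C : Set Ω}
    (hC : C ⊆ ⋃ j < o, M j) (hCo : #C < o.cof) : ∃ i < o, C ⊆ M i := by
  have hmem : ∀ x : C, ∃ j < o, (x : Ω) ∈ M j := fun x => by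
    simpa only [Set.mem_iUnion, exists_prop] using hC x.2
  choose f hfo hfM using hmem
  have hsup : ⨆ x, f x < o := Ordinal.iSup_lt_of_lt_cof hCo hfo
  exact ⟨⨆ x, f x, hsup, fun x hx =>
    hM _ _ (Ordinal.le_iSup f ⟨x, hx⟩) hsup (hfM ⟨x, hx⟩)⟩

/-- `ind A C B` reads "`A` is independent from `B` over `C`". -/
theorem stmt_4_general {Ω : Type*} (ind : Set Ω → Set Ω → Set Ω → Prop)
    (baseMonoR : ∀ A D C B, ind A D B → D ⊆ C → C ⊆ B → ind A C B)
    (T : Cardinal)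
    (localChar : ∀ A : Set Ω, A.Finite → ∀ B : Set Ω,
      ∃ C ⊆ B, #C < Order.succ T ∧ ind A C B)
    (κ : Cardinal) (hreg : κ.IsRegular) (hκ : Order.succ T < κ)
    (M : Ordinal → Set Ω)
    (hchain : ∀ i j : Ordinal, i ≤ j → j < κ.ord → M i ⊆ M j)
    (a : Set Ω) (ha : a.Finite) :
    ∃ i < κ.ord, ind a (M i) (⋃ j ∈ {j : Ordinal | j < κ.ord}, M j) := by
  obtain ⟨C, hCU, hCT, hind⟩ := localChar a ha (⋃ j ∈ {j : Ordinal | j < κ.ord}, M j)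
  obtain ⟨i, hi, hCi⟩ := exists_lt_subset_of_subset_biUnion_of_mk_lt_cof hchain hCU
    (hreg.cof_ord.symm ▸ hCT.trans hκ)
  exact ⟨i, hi, baseMonoR a C (M i) _ hind hCi (Set.subset_biUnion_of_mem hi)⟩

/-- Local character over continuous chains, from the abstract properties of an
independence relation (`ind A C B` is read as "`A` is independent from `B` over `C`"). -/
theorem stmt_4 {Ω : Type*} (ind : Set Ω → Set Ω → Set Ω → Prop)
    (symm : ∀ A C B, ind A C B ↔ ind B C A)
    (monoR : ∀ A C B B', ind A C B → B' ⊆ B → ind A C B')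
    (monoL : ∀ A C B A', ind A C B → A' ⊆ A → ind A' C B)
    (baseMonoR : ∀ A D C B, ind A D B → D ⊆ C → C ⊆ B → ind A C B)
    (transL : ∀ A D C B, D ⊆ C → C ⊆ B → ind B C A → ind C D A → ind B D A)
    (extR : ∀ A C B B', ind A C B → B ⊆ B' → ∃ A', ind A' C B')
    (T : Cardinal) (hT : ℵ₀ ≤ T)
    (localChar : ∀ A : Set Ω, A.Finite → ∀ B : Set Ω,
      ∃ C ⊆ B, #C < Order.succ T ∧ ind A C B)
    (κ : Cardinal) (hreg : κ.IsRegular) (hκ : Order.succ T < κ)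
    (M : Ordinal → Set Ω)
    (hchain : ∀ i j : Ordinal, i ≤ j → j < κ.ord → M i ⊆ M j)
    (hcont : ∀ i : Ordinal, i < κ.ord → Order.IsSuccLimit i → M i = ⋃ j < i, M j)
    (hsize : ∀ i : Ordinal, i < κ.ord → #(M i) < κ)
    (hunion : #(⋃ i ∈ {j : Ordinal | j < κ.ord}, M i) = κ)
    (a : Set Ω) (ha : a.Finite) :
    ∃ i < κ.ord, ind a (M i) (⋃ j ∈ {j : Ordinal | j < κ.ord}, M j) :=
  stmt_4_general ind baseMonoR T localChar κ hreg hκ M hchain a ha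
end
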